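/- arXiv:2002.01387 — 4 statements merged into one kernel-verified Lean document; each statement's English description precedes it below -/
import Mathlib

section
/- Let B ∈ ℝ^{m×n} be a matrix, X ∈ ℝ^{n×ℓ} a test matrix, Y = B X, and let P_Y be the orthogonal projector onto the range of Y. Define the error matrix E = (I − P_Y) B. Then Eᵀ E equals the Schur complement of BᵀB with respect to X, i.e., Eᵀ E = BᵀB − (BᵀB X)(Xᵀ BᵀB X)† (BᵀB X)ᵀ, where † denotes the Moore–Penrose pseudoinverse. -/
open Matrix

/-- The Moore–Penrose pseudoinverse of a real matrix: the (unique) matrix satisfying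
the four Penrose conditions. -/
noncomputable def pinv {m n : ℕ} (A : Matrix (Fin m) (Fin n) ℝ) :
    Matrix (Fin n) (Fin m) ℝ :=
  letI := Classical.propDecidable
  if h : ∃ B : Matrix (Fin n) (Fin m) ℝ,
      (A * B)ᵀ = A * B ∧ (B * A)ᵀ = B * A ∧ A * B * A = A ∧ B * A * B = B
  then h.choose else 0

namespace MPAux

def Penrose {k l : ℕ} (A : Matrix (Fin k) (Fin l) ℝ) (M : Matrix (Fin l) (Fin k) ℝ) : Prop :=
  (A * M)ᵀ = A * M ∧ (M * A)ᵀ = M * A ∧ A * M * A = A ∧ M * A * M = M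

lemma ct_eq {k l : ℕ} (A : Matrix (Fin k) (Fin l) ℝ) : Aᴴ = Aᵀ := by
  ext i j; simp [conjTranspose_apply]

lemma pinv_penrose {k l : ℕ} {A : Matrix (Fin k) (Fin l) ℝ}
    (h : ∃ M, Penrose A M) : Penrose A (pinv A) := by
  have h' : ∃ M : Matrix (Fin l) (Fin k) ℝ,
      (A * M)ᵀ = A * M ∧ (M * A)ᵀ = M * A ∧ A * M * A = A ∧ M * A * M = M := h
  unfold pinv
  rw [dif_pos h']
  exact h'.choose_spec

lemma penrose_unique {k l : ℕ} {A : Matrix (Fin k) (Fin l) ℝ}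
    {M N : Matrix (Fin l) (Fin k) ℝ} (hM : Penrose A M) (hN : Penrose A N) : M = N := by
  obtain ⟨m1, m2, m3, m4⟩ := hM
  obtain ⟨n1, n2, n3, n4⟩ := hN
  have key1 : M = M * A * N := by
    calc M = M * A * M := m4.symm
    _ = M * (A * M)ᵀ := by rw [m1, Matrix.mul_assoc]
    _ = M * (Mᵀ * Aᵀ) := by rw [transpose_mul]
    _ = M * (Mᵀ * (A * N * A)ᵀ) := by rw [n3]
    _ = M * (Mᵀ * (Aᵀ * (A * N)ᵀ)) := by rw [transpose_mul]
    _ = M * (Mᵀ * (Aᵀ * (A * N))) := by rw [n1]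
    _ = M * (Mᵀ * Aᵀ) * (A * N) := by simp only [Matrix.mul_assoc]
    _ = M * (A * M)ᵀ * (A * N) := by rw [transpose_mul]
    _ = M * (A * M) * (A * N) := by rw [m1]
    _ = (M * A * M) * (A * N) := by simp only [Matrix.mul_assoc]
    _ = M * (A * N) := by rw [m4]
    _ = M * A * N := by rw [Matrix.mul_assoc]
  have hAt : Aᵀ = M * A * Aᵀ := by
    calc Aᵀ = (A * M * A)ᵀ := by rw [m3]
    _ = Aᵀ * (A * M)ᵀ := by rw [transpose_mul]
    _ = Aᵀ * (Mᵀ * Aᵀ) := by rw [transpose_mul]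
    _ = (Aᵀ * Mᵀ) * Aᵀ := by rw [Matrix.mul_assoc]
    _ = (M * A)ᵀ * Aᵀ := by rw [transpose_mul]
    _ = M * A * Aᵀ := by rw [m2]
  have key2 : N = M * A * N := by
    calc N = N * A * N := n4.symm
    _ = (N * A)ᵀ * N := by rw [n2]
    _ = Aᵀ * Nᵀ * N := by rw [transpose_mul]
    _ = (M * A * Aᵀ) * Nᵀ * N := by rw [← hAt]
    _ = M * A * (Aᵀ * Nᵀ) * N := by simp only [Matrix.mul_assoc]
    _ = M * A * (N * A)ᵀ * N := by rw [transpose_mul]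
    _ = M * A * (N * A) * N := by rw [n2]
    _ = M * A * (N * A * N) := by simp only [Matrix.mul_assoc]
    _ = M * A * N := by rw [n4]
  rw [key1, ← key2]

lemma exists_penrose_of_symm {k : ℕ} (G : Matrix (Fin k) (Fin k) ℝ) (hG : Gᵀ = G) :
    ∃ M, Penrose G M := by
  have hA : G.IsHermitian := by rw [IsHermitian, ct_eq, hG]
  set U : Matrix (Fin k) (Fin k) ℝ := (hA.eigenvectorUnitary : Matrix (Fin k) (Fin k) ℝ) with hUdef
  set e : Fin k → ℝ := RCLike.ofReal ∘ hA.eigenvalues with hedef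
  have hspec : G = U * diagonal e * star U := hA.spectral_theorem
  have hU1 : star U * U = 1 := (Matrix.mem_unitaryGroup_iff').mp hA.eigenvectorUnitary.2
  set e' : Fin k → ℝ := fun i => if e i = 0 then 0 else (e i)⁻¹ with he'def
  have sandwich : ∀ p q : Fin k → ℝ,
      (U * diagonal p * star U) * (U * diagonal q * star U)
        = U * diagonal (fun i => p i * q i) * star U := by
    intro p q
    calc (U * diagonal p * star U) * (U * diagonal q * star U)
        = U * diagonal p * (star U * U) * diagonal q * star U := by
          simp only [Matrix.mul_assoc]
      _ = U * (diagonal p * diagonal q) * star U := by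
          rw [hU1]; simp only [Matrix.mul_one, Matrix.mul_assoc]
      _ = U * diagonal (fun i => p i * q i) * star U := by
          rw [diagonal_mul_diagonal]
  have symm_sand : ∀ p : Fin k → ℝ, (U * diagonal p * star U)ᵀ = U * diagonal p * star U := by
    intro p
    rw [← ct_eq]
    simp only [conjTranspose_mul, conjTranspose_conjTranspose, star_eq_conjTranspose,
      diagonal_conjTranspose, Pi.star_def, star_trivial]
    simp only [Matrix.mul_assoc]
  have hfun1 : (fun i => e i * e' i * e i) = e := by
    funext i
    by_cases h : e i = 0
    · simp [he'def, h]
    · simp only [he'def, if_neg h]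
      rw [mul_inv_cancel₀ h, one_mul]
  have hfun2 : (fun i => e' i * e i * e' i) = e' := by
    funext i
    by_cases h : e i = 0
    · simp [he'def, h]
    · simp only [he'def, if_neg h]
      rw [inv_mul_cancel₀ h, one_mul]
  refine ⟨U * diagonal e' * star U, ?_, ?_, ?_, ?_⟩
  · rw [hspec, sandwich]; exact symm_sand _
  · rw [hspec, sandwich]; exact symm_sand _
  · rw [hspec, sandwich, sandwich]
    exact congrArg (fun d => U * diagonal d * star U) hfun1
  · rw [hspec, sandwich, sandwich]
    exact congrArg (fun d => U * diagonal d * star U) hfun2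

lemma pinv_symm {k : ℕ} (G : Matrix (Fin k) (Fin k) ℝ) (hG : Gᵀ = G) :
    (pinv G)ᵀ = pinv G := by
  have hex := exists_penrose_of_symm G hG
  obtain ⟨p1, p2, p3, p4⟩ := pinv_penrose hex
  set M := pinv G with hM
  have hPt : Penrose G Mᵀ := by
    refine ⟨?_, ?_, ?_, ?_⟩
    · have h : G * Mᵀ = M * G := by
        calc G * Mᵀ = Gᵀ * Mᵀ := by rw [hG]
        _ = (M * G)ᵀ := by rw [transpose_mul]
        _ = M * G := p2
      rw [h, p2]
    · have h : Mᵀ * G = G * M := by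
        calc Mᵀ * G = Mᵀ * Gᵀ := by rw [hG]
        _ = (G * M)ᵀ := by rw [transpose_mul]
        _ = G * M := p1
      rw [h, p1]
    · calc G * Mᵀ * G = (Gᵀ * M * Gᵀ)ᵀ := by
            simp only [transpose_mul, transpose_transpose, Matrix.mul_assoc]
      _ = (G * M * G)ᵀ := by rw [hG]
      _ = Gᵀ := by rw [p3]
      _ = G := hG
    · calc Mᵀ * G * Mᵀ = (M * Gᵀ * M)ᵀ := by
            simp only [transpose_mul, transpose_transpose, Matrix.mul_assoc]
      _ = (M * G * M)ᵀ := by rw [hG]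
      _ = Mᵀ := by rw [p4]
  exact penrose_unique hPt ⟨p1, p2, p3, p4⟩

end MPAux

/-- **Rangefinder error as a Schur complement.**
Let `Y = B X`, let `P_Y = Y (YᵀY)† Yᵀ` be the orthogonal projector onto the range
of `Y`, and let `E = (I − P_Y) B`.  Then
`Eᵀ E = BᵀB − (BᵀB X)(Xᵀ BᵀB X)† (BᵀB X)ᵀ`, the Schur complement of `BᵀB` with
respect to `X`. -/
theorem rangefinder_error_eq_schur_complement
    {m n ℓ : ℕ} (B : Matrix (Fin m) (Fin n) ℝ) (X : Matrix (Fin n) (Fin ℓ) ℝ) :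
    let Y := B * X
    let PY := Y * pinv (Yᵀ * Y) * Yᵀ
    let E := (1 - PY) * B
    let A := Bᵀ * B
    Eᵀ * E = A - (A * X) * pinv (Xᵀ * A * X) * (A * X)ᵀ := by
  intro Y PY E A
  have hY : Y = B * X := rfl
  have hPY : PY = Y * pinv (Yᵀ * Y) * Yᵀ := rfl
  have hE : E = (1 - PY) * B := rfl
  have hA : A = Bᵀ * B := rfl
  clear_value Y PY E A
  have hYG : Xᵀ * A * X = Yᵀ * Y := by
    rw [hA, hY, transpose_mul]
    simp only [Matrix.mul_assoc]
  set G : Matrix (Fin ℓ) (Fin ℓ) ℝ := Yᵀ * Y with hGdef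
  have hGsymm : Gᵀ = G := by
    rw [hGdef, transpose_mul, transpose_transpose]
  have hex := MPAux.exists_penrose_of_symm G hGsymm
  obtain ⟨p1, p2, p3, p4⟩ := MPAux.pinv_penrose hex
  set M := pinv G with hMdef
  set P : Matrix (Fin m) (Fin m) ℝ := Y * M * Yᵀ with hPdef
  have hMs : Mᵀ = M := MPAux.pinv_symm G hGsymm
  have hPs : Pᵀ = P := by
    rw [hPdef]
    simp only [transpose_mul, transpose_transpose, hMs, Matrix.mul_assoc]
  have hPP : P * P = P := by
    rw [hPdef]
    calc Y * M * Yᵀ * (Y * M * Yᵀ) = Y * (M * (Yᵀ * Y) * M) * Yᵀ := by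
          simp only [Matrix.mul_assoc]
    _ = Y * M * Yᵀ := by rw [← hGdef, p4, Matrix.mul_assoc]
  have lhs_eq : Eᵀ * E = A - Bᵀ * P * B := by
    rw [hE, hPY, transpose_mul]
    have h1P : (1 - P)ᵀ = 1 - P := by rw [transpose_sub, transpose_one, hPs]
    calc Bᵀ * (1 - P)ᵀ * ((1 - P) * B) = Bᵀ * ((1 - P) * (1 - P)) * B := by
          rw [h1P]; simp only [Matrix.mul_assoc]
    _ = Bᵀ * (1 - P) * B := by
          rw [show (1 - P) * (1 - P) = 1 - P from by
            simp only [Matrix.sub_mul, Matrix.mul_sub, Matrix.one_mul, Matrix.mul_one, hPP]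
            abel]
    _ = A - Bᵀ * P * B := by
          rw [hA]
          simp only [Matrix.mul_sub, Matrix.sub_mul, Matrix.mul_one]
  rw [lhs_eq, hYG, ← hMdef]
  congr 1
  have hAX : A * X = Bᵀ * Y := by
    rw [hA, hY, Matrix.mul_assoc]
  rw [hPdef, hAX]
  rw [show (Bᵀ * Y)ᵀ = Yᵀ * B from by rw [transpose_mul, transpose_transpose]]
  simp only [Matrix.mul_assoc]
end

section
/- Let A ∈ ℝ^{n×n} be positive semidefinite and X ∈ ℝ^{n×ℓ}. The Nyström approximation A⟨X⟩ := (AX)(Xᵀ A X)†(AX)ᵀ satisfies A⟨X⟩ = A^{1/2} P A^{1/2}, where P is the orthogonal projector onto the range of A^{1/2} X. Consequently the Nyström error A − A⟨X⟩ is positive semidefinite. -/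
open Matrix

/-- The PSD square root of a positive semidefinite matrix (the definition
`Matrix.PosSemidef.sqrt` of the older Mathlib, since removed). -/
noncomputable def Matrix.PosSemidef.sqrt {n : Type*} [Fintype n] [DecidableEq n]
    {A : Matrix n n ℝ} (hA : A.PosSemidef) : Matrix n n ℝ :=
  (hA.1.eigenvectorUnitary : Matrix n n ℝ) * diagonal ((↑) ∘ (√·) ∘ hA.1.eigenvalues) *
    (star hA.1.eigenvectorUnitary : Matrix n n ℝ)

/-!
Writing `A = R R` with `R = A^{1/2}` symmetric and `S = R X`, one has `AX = R S` and
`XᵀAX = SᵀS`, so the Nyström approximation is `R (S (SᵀS)† Sᵀ) R = R P R` by mere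
reassociation. The Penrose condition `G G† G = G` for `G = SᵀS` cancels to `S G† SᵀS = S`,
i.e. `P S = S`; from this `P Pᵀ = Pᵀ`, so `P` is an orthogonal projector. Then
`A - R P R = R (1 - P) R = ((1 - P) R)ᵀ ((1 - P) R)` is positive semidefinite.
-/

theorem isStarProjection_of_mul_star_self_eq_star {R : Type*} [Monoid R] [StarMul R]
    {p : R} (h : p * star p = star p) : IsStarProjection p := by
  have h' := congrArg star h
  rw [star_mul, star_star] at h'
  have hself : star p = p := h.symm.trans h'
  exact ⟨by rwa [hself] at h, hself⟩

theorem IsStarProjection.posSemidef {n R : Type*} [Fintype n] [Ring R] [PartialOrder R]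
    [StarRing R] [StarOrderedRing R] {P : Matrix n n R} (hP : IsStarProjection P) :
    P.PosSemidef := by
  have hPP : Pᴴ * P = P := by
    rw [← star_eq_conjTranspose, hP.isSelfAdjoint.star_eq, hP.isIdempotentElem.eq]
  simpa only [hPP] using posSemidef_conjTranspose_mul_self P

namespace Matrix.PosSemidef

variable {n : Type*} [Fintype n] [DecidableEq n] {A : Matrix n n ℝ} (hA : A.PosSemidef)

theorem transpose_sqrt : hA.sqrtᵀ = hA.sqrt := by
  simp [Matrix.PosSemidef.sqrt, transpose_mul, Matrix.mul_assoc, star_eq_conjTranspose]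

theorem sqrt_mul_self : hA.sqrt * hA.sqrt = A := by
  have hU : (star hA.1.eigenvectorUnitary : Matrix n n ℝ) * hA.1.eigenvectorUnitary = 1 :=
    Unitary.coe_star_mul_self _
  have hspec := hA.1.spectral_theorem
  rw [Unitary.conjStarAlgAut_apply] at hspec
  conv_rhs => rw [hspec]
  simp only [Matrix.PosSemidef.sqrt, Matrix.mul_assoc]
  rw [← Matrix.mul_assoc (star _ : Matrix n n ℝ), hU, Matrix.one_mul,
    ← Matrix.mul_assoc (diagonal _), diagonal_mul_diagonal]
  congr 3
  funext i
  simp [Real.mul_self_sqrt (hA.eigenvalues_nonneg i)]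

end Matrix.PosSemidef

theorem Matrix.mul_eq_self_of_transpose_mul_self_mul_eq {m n : Type*} [Fintype m] [Fintype n]
    [DecidableEq n] {S : Matrix m n ℝ} {M : Matrix n n ℝ} (h : Sᵀ * S * M = Sᵀ * S) :
    S * M = S := by
  have hG : (Sᴴ * S) * (M - 1) = 0 := by
    rw [conjTranspose_eq_transpose_of_trivial, Matrix.mul_sub, h, Matrix.mul_one, sub_self]
  rw [conjTranspose_mul_self_mul_eq_zero, Matrix.mul_sub, Matrix.mul_one, sub_eq_zero] at hG
  exact hG

theorem isStarProjection_mul_pinv_transpose_mul_self_mul_transpose {n ℓ : ℕ}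
    (S : Matrix (Fin n) (Fin ℓ) ℝ) : IsStarProjection (S * pinv (Sᵀ * S) * Sᵀ) := by
  unfold pinv
  split_ifs with h
  · obtain ⟨-, -, hGBG, -⟩ := h.choose_spec
    set B := h.choose
    have hPS : S * B * Sᵀ * S = S := by
      simpa only [Matrix.mul_assoc] using
        mul_eq_self_of_transpose_mul_self_mul_eq (M := B * (Sᵀ * S)) (by
          simpa only [Matrix.mul_assoc] using hGBG)
    apply isStarProjection_of_mul_star_self_eq_star
    simp only [star_eq_conjTranspose, conjTranspose_eq_transpose_of_trivial, transpose_mul,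
      transpose_transpose, ← Matrix.mul_assoc, hPS]
  · simp [IsStarProjection.zero]

/-- **The Nyström approximation via the PSD square root.**
For PSD `A` and a test matrix `X`, the Nyström approximation
`A⟨X⟩ = (AX)(XᵀAX)†(AX)ᵀ` equals `A^{1/2} P A^{1/2}` where `P` is the orthogonal
projector onto the range of `A^{1/2} X`; consequently `A − A⟨X⟩` is PSD. -/
theorem nystrom_eq_sqrt_proj_sqrt
    {n ℓ : ℕ} (A : Matrix (Fin n) (Fin n) ℝ) (hA : A.PosSemidef)
    (X : Matrix (Fin n) (Fin ℓ) ℝ) :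
    let Anys := (A * X) * pinv (Xᵀ * A * X) * (A * X)ᵀ
    let S := hA.sqrt * X
    let P := S * pinv (Sᵀ * S) * Sᵀ
    Anys = hA.sqrt * P * hA.sqrt ∧ (A - Anys).PosSemidef := by
  intro Anys S P
  have hR : hA.sqrt * hA.sqrt = A := hA.sqrt_mul_self
  have hAX : A * X = hA.sqrt * S := by
    conv_lhs => rw [← hR]
    exact Matrix.mul_assoc _ _ _
  have hGram : Xᵀ * A * X = Sᵀ * S := by
    conv_lhs => rw [← hR]
    simp only [S, transpose_mul, hA.transpose_sqrt, Matrix.mul_assoc]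
  have hAnys : Anys = hA.sqrt * P * hA.sqrt := by
    simp only [Anys, P, hAX, hGram, transpose_mul, hA.transpose_sqrt, Matrix.mul_assoc]
  have hErr : A - Anys = hA.sqrt * (1 - P) * hA.sqrtᴴ := by
    rw [hAnys, conjTranspose_eq_transpose_of_trivial, hA.transpose_sqrt, Matrix.mul_sub,
      Matrix.sub_mul, Matrix.mul_one, hR]
  refine ⟨hAnys, hErr ▸ ?_⟩
  exact (isStarProjection_mul_pinv_transpose_mul_self_mul_transpose S).one_sub.posSemidef
    |>.mul_mul_conjTranspose_same _
end

section
/- Monotonicity of the rangefinder error: if B, C ∈ ℝ^{m×n} satisfy BᵀB ⪯ CᵀC in the semidefinite order, then for every fixed test matrix X ∈ ℝ^{n×ℓ}, the Schur complement satisfies (BᵀB)/X ⪯ (CᵀC)/X; i.e., the squared rangefinder error increases in the semidefinite order. -/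
/-! The whole argument is one congruence identity. Write `G_A = XᵀAX`, `g_A = G_A†`, and
`P = X g_B Xᵀ B`, `D = g_B XᵀB − g_A XᵀA`. Then
`B/X − A/X = (1 − P)ᵀ (B − A) (1 − P) + Dᵀ G_A D`,
a sum of two PSD congruences. The identity is pure algebra once `g_A` is symmetric and
`A X g_A G_A = A X`. For PSD `A = NᵀN` the latter reduces to `M g_A G_A = M` with `M = NX`,
`G_A = MᵀM`, which holds because `Mᵀ` annihilates `M (g_A G_A − 1)`. -/

open Matrix

/-- The generalized Schur complement `A/X = A − (AX)(XᵀAX)†(AX)ᵀ` of a PSD matrix `A`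
with respect to the range of `X`. -/
noncomputable def schurComp {n ℓ : ℕ} (A : Matrix (Fin n) (Fin n) ℝ)
    (X : Matrix (Fin n) (Fin ℓ) ℝ) : Matrix (Fin n) (Fin n) ℝ :=
  A - (A * X) * pinv (Xᵀ * A * X) * (A * X)ᵀ

namespace Matrix

theorem mul_mul_transpose_mul_mul_mul {m n k l p q R : Type*} [CommRing R] [Fintype k]
    [Fintype n] [Fintype l] [Fintype p] [DecidableEq l]
    {U : Matrix m k R} {M : Matrix k l R} {V : Matrix n l R} {N : Matrix l p R}
    {W : Matrix p q R} (hV : Vᵀ * V = 1) : U * M * Vᵀ * (V * N * W) = U * (M * N) * W := by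
  simp only [Matrix.mul_assoc, ← Matrix.mul_assoc Vᵀ, hV, Matrix.one_mul]

section MoorePenrose

variable {m n R : Type*} [Fintype m] [Fintype n] [CommRing R]

def IsMoorePenroseInverse (A : Matrix m n R) (B : Matrix n m R) : Prop :=
  (A * B)ᵀ = A * B ∧ (B * A)ᵀ = B * A ∧ A * B * A = A ∧ B * A * B = B

theorem IsMoorePenroseInverse.transpose {A : Matrix m n R} {B : Matrix n m R}
    (h : IsMoorePenroseInverse A B) : IsMoorePenroseInverse Aᵀ Bᵀ := by
  obtain ⟨hAB, hBA, hABA, hBAB⟩ := h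
  refine ⟨?_, ?_, ?_, ?_⟩
  · rw [← transpose_mul, transpose_transpose, hBA]
  · rw [← transpose_mul, transpose_transpose, hAB]
  · rw [← transpose_mul, ← transpose_mul, ← Matrix.mul_assoc, hABA]
  · rw [← transpose_mul, ← transpose_mul, ← Matrix.mul_assoc, hBAB]

theorem IsMoorePenroseInverse.mul_left_eq {A : Matrix m n R} {B₁ B₂ : Matrix n m R}
    (h₁ : IsMoorePenroseInverse A B₁) (h₂ : IsMoorePenroseInverse A B₂) : A * B₁ = A * B₂ :=
  calc A * B₁ = (A * B₂ * A * B₁)ᵀ := by rw [h₂.2.2.1, h₁.1]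
    _ = (A * B₁)ᵀ * (A * B₂)ᵀ := by rw [Matrix.mul_assoc _ A, transpose_mul]
    _ = A * B₁ * A * B₂ := by rw [h₁.1, h₂.1, Matrix.mul_assoc (A * B₁)]
    _ = A * B₂ := by rw [h₁.2.2.1]

theorem IsMoorePenroseInverse.unique {A : Matrix m n R} {B₁ B₂ : Matrix n m R}
    (h₁ : IsMoorePenroseInverse A B₁) (h₂ : IsMoorePenroseInverse A B₂) : B₁ = B₂ := by
  have hmul_left : A * B₁ = A * B₂ := h₁.mul_left_eq h₂
  have hmul_right : B₁ * A = B₂ * A := by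
    simpa only [← transpose_mul, transpose_inj] using h₁.transpose.mul_left_eq h₂.transpose
  calc B₁ = B₁ * (A * B₁) := by rw [← Matrix.mul_assoc, h₁.2.2.2]
    _ = B₂ * (A * B₂) := by rw [hmul_left, ← Matrix.mul_assoc, hmul_right, Matrix.mul_assoc]
    _ = B₂ := by rw [← Matrix.mul_assoc, h₂.2.2.2]

theorem IsMoorePenroseInverse.transpose_eq_self {A : Matrix n n R} {B : Matrix n n R}
    (hA : Aᵀ = A) (h : IsMoorePenroseInverse A B) : Bᵀ = B :=
  (hA ▸ h.transpose).unique h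

theorem IsMoorePenroseInverse.conj {k l : Type*} [Fintype k] [Fintype l] [DecidableEq k]
    [DecidableEq l] {U : Matrix m k R} {V : Matrix n l R} {D : Matrix k l R} {E : Matrix l k R}
    (hU : Uᵀ * U = 1) (hV : Vᵀ * V = 1) (h : IsMoorePenroseInverse D E) :
    IsMoorePenroseInverse (U * D * Vᵀ) (V * E * Uᵀ) := by
  obtain ⟨hDE, hED, hDED, hEDE⟩ := h
  refine ⟨?_, ?_, ?_, ?_⟩
  · rw [mul_mul_transpose_mul_mul_mul hV, transpose_mul, transpose_mul, transpose_transpose, hDE,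
      ← Matrix.mul_assoc]
  · rw [mul_mul_transpose_mul_mul_mul hU, transpose_mul, transpose_mul, transpose_transpose, hED,
      ← Matrix.mul_assoc]
  · rw [mul_mul_transpose_mul_mul_mul hV, mul_mul_transpose_mul_mul_mul hU, hDED]
  · rw [mul_mul_transpose_mul_mul_mul hU, mul_mul_transpose_mul_mul_mul hV, hEDE]

theorem isMoorePenroseInverse_diagonal {K : Type*} [Field K] [DecidableEq n] (d : n → K) :
    IsMoorePenroseInverse (diagonal d) (diagonal d⁻¹) := by
  have inv_mul_inv_cancel (a : K) : a⁻¹ * a * a⁻¹ = a⁻¹ := by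
    simpa only [inv_inv] using mul_inv_mul_cancel a⁻¹
  refine ⟨?_, ?_, ?_, ?_⟩ <;>
    simp only [diagonal_mul_diagonal, diagonal_transpose, Pi.inv_apply, mul_inv_mul_cancel,
      inv_mul_inv_cancel]
  rfl

end MoorePenrose

theorem IsHermitian.exists_isMoorePenroseInverse {n : Type*} [Fintype n] [DecidableEq n]
    {A : Matrix n n ℝ} (hA : A.IsHermitian) : ∃ B, IsMoorePenroseInverse A B := by
  set U : Matrix n n ℝ := (hA.eigenvectorUnitary : Matrix n n ℝ)
  have hU : Uᵀ * U = 1 := by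
    simpa only [star_eq_conjTranspose, conjTranspose_eq_transpose_of_trivial] using
      (mem_unitaryGroup_iff').mp hA.eigenvectorUnitary.2
  have hA_eq : A = U * diagonal (RCLike.ofReal ∘ hA.eigenvalues) * Uᵀ := by
    simpa only [Unitary.conjStarAlgAut_apply, star_eq_conjTranspose,
      conjTranspose_eq_transpose_of_trivial] using hA.spectral_theorem
  exact ⟨_, hA_eq ▸ (isMoorePenroseInverse_diagonal _).conj hU hU⟩

end Matrix

theorem isMoorePenroseInverse_pinv_of_exists {m n : ℕ} {A : Matrix (Fin m) (Fin n) ℝ}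
    (h : ∃ B, IsMoorePenroseInverse A B) : IsMoorePenroseInverse A (pinv A) := by
  have hpinv : pinv A = h.choose := dif_pos h
  exact hpinv ▸ h.choose_spec

theorem Matrix.IsHermitian.isMoorePenroseInverse_pinv {n : ℕ} {A : Matrix (Fin n) (Fin n) ℝ}
    (hA : A.IsHermitian) : IsMoorePenroseInverse A (pinv A) :=
  isMoorePenroseInverse_pinv_of_exists hA.exists_isMoorePenroseInverse

theorem schur_sub_schur_eq {n l R : Type*} [Fintype n] [Fintype l] [DecidableEq n] [CommRing R]
    {A B : Matrix n n R} {X : Matrix n l R} {g h : Matrix l l R}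
    (hA : Aᵀ = A) (hB : Bᵀ = B) (hg : gᵀ = g) (hh : hᵀ = h)
    (hAg : A * X * g * (Xᵀ * A * X) = A * X) (hBh : B * X * h * (Xᵀ * B * X) = B * X) :
    (B - B * X * h * (B * X)ᵀ) - (A - A * X * g * (A * X)ᵀ) =
      (1 - X * h * Xᵀ * B)ᵀ * (B - A) * (1 - X * h * Xᵀ * B) +
        (h * Xᵀ * B - g * Xᵀ * A)ᵀ * (Xᵀ * A * X) * (h * Xᵀ * B - g * Xᵀ * A) := by
  have hAg' (T : Matrix l n R) :
      A * (X * (g * (Xᵀ * (A * (X * T))))) = A * (X * T) := by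
    simpa only [Matrix.mul_assoc] using congrArg (· * T) hAg
  have hBh' (T : Matrix l n R) :
      B * (X * (h * (Xᵀ * (B * (X * T))))) = B * (X * T) := by
    simpa only [Matrix.mul_assoc] using congrArg (· * T) hBh
  have hgA : Xᵀ * (A * (X * (g * (Xᵀ * A)))) = Xᵀ * A := by
    simpa only [transpose_mul, transpose_transpose, hA, hg, Matrix.mul_assoc] using
      congrArg transpose hAg
  simp only [transpose_sub, transpose_mul, transpose_one, transpose_transpose, hA, hB, hg, hh,
    Matrix.sub_mul, Matrix.mul_sub, Matrix.mul_one, Matrix.one_mul, Matrix.mul_assoc, hAg', hBh',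
    hgA]
  abel

theorem Matrix.mul_mul_transpose_mul_self_eq_self {m l : Type*} [Fintype m] [Fintype l]
    [DecidableEq l] {N : Matrix m l ℝ} {g : Matrix l l ℝ}
    (hg : Nᵀ * N * g * (Nᵀ * N) = Nᵀ * N) : N * g * (Nᵀ * N) = N := by
  set M := g * (Nᵀ * N) - 1
  have hNM : Nᵀ * (N * M) = 0 :=
    calc Nᵀ * (N * M) = Nᵀ * N * g * (Nᵀ * N) - Nᵀ * N := by
          simp only [M, Matrix.mul_sub, Matrix.mul_one, Matrix.mul_assoc]
      _ = 0 := by rw [hg, sub_self]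
  have hNM_zero : N * M = 0 := by
    rw [← conjTranspose_mul_self_eq_zero, conjTranspose_eq_transpose_of_trivial, transpose_mul,
      Matrix.mul_assoc, hNM, Matrix.mul_zero]
  rw [← sub_eq_zero, Matrix.mul_assoc, ← hNM_zero, Matrix.mul_sub, Matrix.mul_one]

open scoped MatrixOrder in
theorem Matrix.PosSemidef.mul_mul_transpose_mul_mul_eq_mul {n l : Type*} [Fintype n] [Fintype l]
    [DecidableEq n] [DecidableEq l] {A : Matrix n n ℝ} (hA : A.PosSemidef) {X : Matrix n l ℝ} {g : Matrix l l ℝ}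
    (hg : Xᵀ * A * X * g * (Xᵀ * A * X) = Xᵀ * A * X) :
    A * X * g * (Xᵀ * A * X) = A * X := by
  obtain ⟨N, rfl⟩ := CStarAlgebra.nonneg_iff_eq_star_mul_self.mp hA.nonneg
  have hconj : Xᵀ * (star N * N) * X = (N * X)ᵀ * (N * X) := by
    rw [star_eq_conjTranspose, conjTranspose_eq_transpose_of_trivial, transpose_mul]
    simp only [Matrix.mul_assoc]
  rw [hconj] at hg ⊢
  simpa only [Matrix.mul_assoc] using
    congrArg (star N * ·) (mul_mul_transpose_mul_self_eq_self hg)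

theorem Matrix.PosSemidef.schurComp_sub_schurComp {n l : ℕ} {A B : Matrix (Fin n) (Fin n) ℝ}
    (hA : A.PosSemidef) (hAB : (B - A).PosSemidef) (X : Matrix (Fin n) (Fin l) ℝ) :
    (schurComp B X - schurComp A X).PosSemidef := by
  have hB : B.PosSemidef := by simpa only [add_sub_cancel] using hA.add hAB
  have hconj {M : Matrix (Fin n) (Fin n) ℝ} (hM : M.PosSemidef) : (Xᵀ * M * X).PosSemidef := by
    simpa only [conjTranspose_eq_transpose_of_trivial] using hM.conjTranspose_mul_mul_same X
  have hsymm {k : ℕ} {M : Matrix (Fin k) (Fin k) ℝ} (hM : M.PosSemidef) : Mᵀ = M :=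
    (isHermitian_iff_isSymm.mp hM.isHermitian).eq
  have hpinv {M : Matrix (Fin n) (Fin n) ℝ} (hM : M.PosSemidef) :
      IsMoorePenroseInverse (Xᵀ * M * X) (pinv (Xᵀ * M * X)) :=
    (hconj hM).isHermitian.isMoorePenroseInverse_pinv
  rw [schurComp, schurComp, schur_sub_schur_eq (hsymm hA) (hsymm hB)
    ((hpinv hA).transpose_eq_self (hsymm (hconj hA)))
    ((hpinv hB).transpose_eq_self (hsymm (hconj hB)))
    (hA.mul_mul_transpose_mul_mul_eq_mul (hpinv hA).2.2.1)
    (hB.mul_mul_transpose_mul_mul_eq_mul (hpinv hB).2.2.1)]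
  refine .add ?_ ?_
  · simpa only [conjTranspose_eq_transpose_of_trivial] using hAB.conjTranspose_mul_mul_same _
  · simpa only [conjTranspose_eq_transpose_of_trivial] using
      (hconj hA).conjTranspose_mul_mul_same _

/-- **Monotonicity of the rangefinder error.**
If `BᵀB ⪯ CᵀC` in the semidefinite order, then for every test matrix `X`,
`(BᵀB)/X ⪯ (CᵀC)/X`. -/
theorem schur_complement_monotone
    {m₁ m₂ n ℓ : ℕ} (B : Matrix (Fin m₁) (Fin n) ℝ) (C : Matrix (Fin m₂) (Fin n) ℝ)
    (h : (Cᵀ * C - Bᵀ * B).PosSemidef) (X : Matrix (Fin n) (Fin ℓ) ℝ) :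
    (schurComp (Cᵀ * C) X - schurComp (Bᵀ * B) X).PosSemidef := by
  have hB : (Bᵀ * B).PosSemidef := by
    simpa only [conjTranspose_eq_transpose_of_trivial] using posSemidef_conjTranspose_mul_self B
  exact hB.schurComp_sub_schurComp h X
end

section
/- Powering inequality for projectors: Let B ∈ ℝ^{m×n} and let P ∈ ℝ^{m×m} be an orthogonal projector. For every integer q ≥ 1, ‖(I − P) B‖^{2q} ≤ ‖(I − P)(B Bᵀ)^q‖, where ‖·‖ denotes the spectral norm. -/
open Matrix

/-- The spectral norm (ℓ₂ operator norm) of a rectangular real matrix. -/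
noncomputable def specNorm {m n : ℕ} (A : Matrix (Fin m) (Fin n) ℝ) : ℝ :=
  sSup ((fun x : Fin n → ℝ => Real.sqrt (∑ i, (A.mulVec x i) ^ 2)) ''
    {x | ∑ j, (x j) ^ 2 ≤ 1})

section aux

variable {m n : ℕ}

lemma specNorm_bddAbove (A : Matrix (Fin m) (Fin n) ℝ) :
    BddAbove ((fun x : Fin n → ℝ => Real.sqrt (∑ i, (A.mulVec x i) ^ 2)) ''
      {x | ∑ j, (x j) ^ 2 ≤ 1}) := by
  refine ⟨Real.sqrt (∑ i, ∑ j, (A i j) ^ 2), ?_⟩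
  rintro _ ⟨x, hx, rfl⟩
  apply Real.sqrt_le_sqrt
  apply Finset.sum_le_sum
  intro i _
  have h1 : (A.mulVec x i) ^ 2 ≤ (∑ j, (A i j) ^ 2) * ∑ j, (x j) ^ 2 := by
    simpa [Matrix.mulVec, dotProduct] using
      Finset.sum_mul_sq_le_sq_mul_sq Finset.univ (A i) x
  have h2 : (∑ j, (A i j) ^ 2) * ∑ j, (x j) ^ 2 ≤ ∑ j, (A i j) ^ 2 :=
    mul_le_of_le_one_right (Finset.sum_nonneg fun j _ => sq_nonneg _) hx
  exact h1.trans h2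

lemma le_specNorm (A : Matrix (Fin m) (Fin n) ℝ) (x : Fin n → ℝ)
    (hx : ∑ j, (x j) ^ 2 ≤ 1) :
    Real.sqrt (∑ i, (A.mulVec x i) ^ 2) ≤ specNorm A :=
  le_csSup (specNorm_bddAbove A) ⟨x, hx, rfl⟩

lemma specNorm_nonneg (A : Matrix (Fin m) (Fin n) ℝ) : 0 ≤ specNorm A := by
  have := le_specNorm A 0 (by simp)
  simpa using this

lemma specNorm_le (A : Matrix (Fin m) (Fin n) ℝ) (c : ℝ)
    (h : ∀ x : Fin n → ℝ, ∑ j, (x j) ^ 2 ≤ 1 →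
      Real.sqrt (∑ i, (A.mulVec x i) ^ 2) ≤ c) : specNorm A ≤ c := by
  have hne : ((fun x : Fin n → ℝ => Real.sqrt (∑ i, (A.mulVec x i) ^ 2)) ''
      {x | ∑ j, (x j) ^ 2 ≤ 1}).Nonempty := ⟨_, ⟨0, by simp, rfl⟩⟩
  apply csSup_le hne
  rintro _ ⟨x, hx, rfl⟩
  exact h x hx

/-- Powers of a hermitian matrix via its spectral decomposition. -/
lemma pow_spectral {d : ℕ} {A : Matrix (Fin d) (Fin d) ℝ} (hA : A.IsHermitian) (k : ℕ) :
    A ^ k = (hA.eigenvectorUnitary : Matrix (Fin d) (Fin d) ℝ) *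
      (Matrix.diagonal hA.eigenvalues) ^ k *
      star (hA.eigenvectorUnitary : Matrix (Fin d) (Fin d) ℝ) := by
  set U := (hA.eigenvectorUnitary : Matrix (Fin d) (Fin d) ℝ)
  have hU1 : U * star U = 1 := Unitary.mul_star_self_of_mem hA.eigenvectorUnitary.2
  have hU2 : star U * U = 1 := Unitary.star_mul_self_of_mem hA.eigenvectorUnitary.2
  induction k with
  | zero => simp [hU1]
  | succ k ih =>
      have hspec : A = U * Matrix.diagonal hA.eigenvalues * star U := by
        have := hA.spectral_theorem
        simpa using this
      rw [pow_succ A, ih, pow_succ]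
      calc U * Matrix.diagonal hA.eigenvalues ^ k * star U * A
          = U * Matrix.diagonal hA.eigenvalues ^ k * star U *
            (U * Matrix.diagonal hA.eigenvalues * star U) := by rw [← hspec]
        _ = U * (Matrix.diagonal hA.eigenvalues ^ k * Matrix.diagonal hA.eigenvalues) * star U := by
            simp only [mul_assoc]
            rw [← mul_assoc (star U) U, hU2, one_mul]

/-- Quadratic form of a power of a hermitian matrix in eigen-coordinates. -/
lemma quad_pow_eq {d : ℕ} {A : Matrix (Fin d) (Fin d) ℝ} (hA : A.IsHermitian) (k : ℕ)
    (x : Fin d → ℝ) :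
    x ⬝ᵥ ((A ^ k) *ᵥ x) =
      ∑ i, hA.eigenvalues i ^ k *
        ((star (hA.eigenvectorUnitary : Matrix (Fin d) (Fin d) ℝ) *ᵥ x) i) ^ 2 := by
  set U := (hA.eigenvectorUnitary : Matrix (Fin d) (Fin d) ℝ)
  set y := star U *ᵥ x with hy
  have hxU : x ᵥ* U = y := by
    ext j
    simp [hy, Matrix.vecMul, Matrix.mulVec, dotProduct, Matrix.star_apply, mul_comm]
  rw [pow_spectral hA k, ← Matrix.mulVec_mulVec, ← Matrix.mulVec_mulVec,
    Matrix.dotProduct_mulVec, hxU, Matrix.diagonal_pow, ← hy]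
  simp only [dotProduct, Matrix.mulVec_diagonal, Pi.pow_apply]
  exact Finset.sum_congr rfl fun i _ => by ring

lemma dot_y_eq {d : ℕ} {A : Matrix (Fin d) (Fin d) ℝ} (hA : A.IsHermitian) (x : Fin d → ℝ) :
    ∑ i, ((star (hA.eigenvectorUnitary : Matrix (Fin d) (Fin d) ℝ) *ᵥ x) i) ^ 2 = x ⬝ᵥ x := by
  simpa using (quad_pow_eq hA 0 x).symm

end aux

/-- **Powering inequality for projectors.** -/
theorem powering_inequality
    {m n : ℕ} (B : Matrix (Fin m) (Fin n) ℝ) (P : Matrix (Fin m) (Fin m) ℝ)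
    (hsym : Pᵀ = P) (hproj : P * P = P) (q : ℕ) (hq : 1 ≤ q) :
    specNorm ((1 - P) * B) ^ (2 * q) ≤ specNorm ((1 - P) * (B * Bᵀ) ^ q) := by
  set Q : Matrix (Fin m) (Fin m) ℝ := 1 - P with hQ
  set K : Matrix (Fin m) (Fin n) ℝ := Q * B with hK
  set A : Matrix (Fin m) (Fin m) ℝ := B * Bᵀ with hA
  set C : Matrix (Fin m) (Fin m) ℝ := Q * A ^ q with hC
  have hQsym : Qᵀ = Q := by rw [hQ, Matrix.transpose_sub, Matrix.transpose_one, hsym]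
  have hQQ : Q * Q = Q := by
    rw [hQ, sub_mul, one_mul, mul_sub, mul_one, hproj]
    abel
  by_cases hs : specNorm K ≤ 0
  · have h0 : specNorm K = 0 := le_antisymm hs (specNorm_nonneg K)
    rw [h0, zero_pow (by omega)]
    exact specNorm_nonneg C
  push_neg at hs
  -- n must be positive
  rcases Nat.eq_zero_or_pos n with hn | hn
  · exfalso
    have : specNorm K ≤ 0 := specNorm_le K 0 (by
      intro x hx
      subst hn
      simp [Matrix.mulVec, dotProduct])
    linarith
  haveI : Nonempty (Fin n) := Fin.pos_iff_nonempty.mp hn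
  -- the Gram matrix
  have hM : (Kᵀ * K).PosSemidef :=
    Matrix.conjTranspose_eq_transpose_of_trivial K ▸ Matrix.posSemidef_conjTranspose_mul_self K
  set M : Matrix (Fin n) (Fin n) ℝ := Kᵀ * K with hMdef
  have hMh : M.IsHermitian := hM.1
  obtain ⟨i₀, -, hmax⟩ := Finset.exists_max_image Finset.univ hMh.eigenvalues Finset.univ_nonempty
  set lam : ℝ := hMh.eigenvalues i₀ with hlam
  have hlam0 : 0 ≤ lam := hM.eigenvalues_nonneg i₀
  have hdotM : ∀ x : Fin n → ℝ, x ⬝ᵥ (M *ᵥ x) = (K *ᵥ x) ⬝ᵥ (K *ᵥ x) := by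
    intro x
    rw [hMdef, ← Matrix.mulVec_mulVec, Matrix.dotProduct_mulVec, ← Matrix.transpose_transpose K,
      Matrix.vecMul_transpose, Matrix.transpose_transpose]
  -- Step 1 : specNorm K ^ 2 ≤ lam
  have hstep1 : specNorm K ^ 2 ≤ lam := by
    have h1 : specNorm K ≤ Real.sqrt lam := by
      apply specNorm_le
      intro x hx
      apply Real.sqrt_le_sqrt
      have e1 : ∑ i, ((K *ᵥ x) i) ^ 2 = x ⬝ᵥ (M *ᵥ x) := by
        rw [hdotM]
        simp [dotProduct, pow_two]
      have e2 : x ⬝ᵥ (M *ᵥ x) = ∑ i, hMh.eigenvalues i *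
          ((star (hMh.eigenvectorUnitary : Matrix (Fin n) (Fin n) ℝ) *ᵥ x) i) ^ 2 := by
        have := quad_pow_eq hMh 1 x
        simpa using this
      have e3 : ∑ i, hMh.eigenvalues i *
          ((star (hMh.eigenvectorUnitary : Matrix (Fin n) (Fin n) ℝ) *ᵥ x) i) ^ 2 ≤
          ∑ i, lam * ((star (hMh.eigenvectorUnitary : Matrix (Fin n) (Fin n) ℝ) *ᵥ x) i) ^ 2 := by
        apply Finset.sum_le_sum
        intro i _
        exact mul_le_mul_of_nonneg_right (hmax i (Finset.mem_univ i)) (sq_nonneg _)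
      have e4 : ∑ i, lam *
          ((star (hMh.eigenvectorUnitary : Matrix (Fin n) (Fin n) ℝ) *ᵥ x) i) ^ 2 ≤ lam := by
        rw [← Finset.mul_sum, dot_y_eq hMh x]
        have hxx : x ⬝ᵥ x ≤ 1 := by simpa [dotProduct, pow_two] using hx
        have hxx0 : 0 ≤ x ⬝ᵥ x := by
          simp only [dotProduct]
          exact Finset.sum_nonneg fun j _ => mul_self_nonneg _
        nlinarith
      rw [e1, e2]
      exact e3.trans e4
    calc specNorm K ^ 2 ≤ Real.sqrt lam ^ 2 := pow_le_pow_left₀ (specNorm_nonneg K) h1 2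
      _ = lam := Real.sq_sqrt hlam0
  have hlampos : 0 < lam := lt_of_lt_of_le (by positivity) hstep1
  have hsq : Real.sqrt lam ≠ 0 := by positivity
  -- eigenvector of M for lam
  set v : Fin n → ℝ := ⇑(hMh.eigenvectorBasis i₀) with hv
  have hMv : M *ᵥ v = lam • v := hMh.mulVec_eigenvectorBasis i₀
  have hvnorm : ‖hMh.eigenvectorBasis i₀‖ = 1 :=
    hMh.eigenvectorBasis.orthonormal.1 i₀
  have hv1 : v ⬝ᵥ v = 1 := by
    have h3 : Real.sqrt (∑ i, ‖(hMh.eigenvectorBasis i₀) i‖ ^ 2) = 1 := by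
      rw [← EuclideanSpace.norm_eq]; exact hvnorm
    have h4 : ∑ i, ‖(hMh.eigenvectorBasis i₀) i‖ ^ 2 = 1 := by
      have h5 := congrArg (· ^ 2) h3
      simp only [one_pow] at h5
      rwa [Real.sq_sqrt (Finset.sum_nonneg fun i _ => sq_nonneg _)] at h5
    simpa [dotProduct, Real.norm_eq_abs, sq_abs, pow_two, hv] using h4
  set u : Fin m → ℝ := (Real.sqrt lam)⁻¹ • (K *ᵥ v) with hu
  have hKv : (K *ᵥ v) ⬝ᵥ (K *ᵥ v) = lam := by
    rw [← hdotM, hMv, dotProduct_smul, smul_eq_mul, hv1, mul_one]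
  have huu : u ⬝ᵥ u = 1 := by
    rw [hu, smul_dotProduct, dotProduct_smul, hKv, smul_eq_mul, smul_eq_mul]
    calc (Real.sqrt lam)⁻¹ * ((Real.sqrt lam)⁻¹ * lam)
        = (Real.sqrt lam)⁻¹ * ((Real.sqrt lam)⁻¹ * (Real.sqrt lam * Real.sqrt lam)) := by
          rw [Real.mul_self_sqrt hlam0]
      _ = 1 := by field_simp
  have hQu : Q *ᵥ u = u := by
    rw [hu, Matrix.mulVec_smul, Matrix.mulVec_mulVec, hK, ← Matrix.mul_assoc, hQQ]
  have hBtu : Bᵀ *ᵥ u = Real.sqrt lam • v := by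
    have h1 : Bᵀ *ᵥ u = Kᵀ *ᵥ u := by
      conv_lhs => rw [← hQu]
      rw [Matrix.mulVec_mulVec, hK, Matrix.transpose_mul, hQsym]
    rw [h1, hu, Matrix.mulVec_smul, Matrix.mulVec_mulVec, ← hMdef, hMv, smul_smul]
    congr 1
    calc (Real.sqrt lam)⁻¹ * lam
        = (Real.sqrt lam)⁻¹ * (Real.sqrt lam * Real.sqrt lam) := by
          rw [Real.mul_self_sqrt hlam0]
      _ = Real.sqrt lam := by field_simp
  have hAu : u ⬝ᵥ (A *ᵥ u) = lam := by
    rw [hA, ← Matrix.mulVec_mulVec, Matrix.dotProduct_mulVec, ← Matrix.transpose_transpose B,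
      Matrix.vecMul_transpose, Matrix.transpose_transpose, hBtu]
    rw [smul_dotProduct, dotProduct_smul, smul_eq_mul, smul_eq_mul, hv1]
    rw [mul_one, Real.mul_self_sqrt hlam0]
  -- Jensen step
  have hApsd : A.PosSemidef := by
    rw [hA, ← Matrix.conjTranspose_eq_transpose_of_trivial B]
    exact Matrix.posSemidef_self_mul_conjTranspose B
  have hAh : A.IsHermitian := hApsd.1
  set z : Fin m → ℝ := star (hAh.eigenvectorUnitary : Matrix (Fin m) (Fin m) ℝ) *ᵥ u with hz
  have hz1 : ∑ i, (z i) ^ 2 = 1 := by rw [hz, dot_y_eq hAh u, huu]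
  have hjensen : lam ^ q ≤ u ⬝ᵥ ((A ^ q) *ᵥ u) := by
    have e1 : u ⬝ᵥ (A *ᵥ u) = ∑ i, hAh.eigenvalues i * (z i) ^ 2 := by
      have := quad_pow_eq hAh 1 u
      simpa using this
    have e2 : u ⬝ᵥ ((A ^ q) *ᵥ u) = ∑ i, hAh.eigenvalues i ^ q * (z i) ^ 2 :=
      quad_pow_eq hAh q u
    rw [← hAu, e1, e2]
    have hjen := (convexOn_pow q).map_sum_le (t := Finset.univ)
      (w := fun i => (z i) ^ 2) (p := fun i => hAh.eigenvalues i)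
      (fun i _ => sq_nonneg _) hz1 (fun i _ => hApsd.eigenvalues_nonneg i)
    simp only [smul_eq_mul] at hjen
    calc (∑ i, hAh.eigenvalues i * (z i) ^ 2) ^ q
        = (∑ i, (z i) ^ 2 * hAh.eigenvalues i) ^ q := by
          congr 1; exact Finset.sum_congr rfl fun i _ => mul_comm _ _
      _ ≤ ∑ i, (z i) ^ 2 * hAh.eigenvalues i ^ q := hjen
      _ = ∑ i, hAh.eigenvalues i ^ q * (z i) ^ 2 :=
          Finset.sum_congr rfl fun i _ => mul_comm _ _
  -- transfer to C
  have hCu : u ⬝ᵥ ((A ^ q) *ᵥ u) = u ⬝ᵥ (C *ᵥ u) := by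
    rw [hC, ← Matrix.mulVec_mulVec, Matrix.dotProduct_mulVec (A := Q),
      ← hQsym, Matrix.vecMul_transpose, hQu, Matrix.dotProduct_mulVec]
  -- Cauchy-Schwarz step
  have hfinal : u ⬝ᵥ (C *ᵥ u) ≤ specNorm C := by
    have hcs : (u ⬝ᵥ (C *ᵥ u)) ^ 2 ≤ ∑ i, ((C *ᵥ u) i) ^ 2 := by
      have := Finset.sum_mul_sq_le_sq_mul_sq Finset.univ u (C *ᵥ u)
      have hu2 : ∑ i, (u i) ^ 2 = 1 := by simpa [dotProduct, pow_two] using huu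
      calc (u ⬝ᵥ (C *ᵥ u)) ^ 2 = (∑ i, u i * (C *ᵥ u) i) ^ 2 := rfl
        _ ≤ (∑ i, (u i) ^ 2) * ∑ i, ((C *ᵥ u) i) ^ 2 := this
        _ = ∑ i, ((C *ᵥ u) i) ^ 2 := by rw [hu2, one_mul]
    have h1 : u ⬝ᵥ (C *ᵥ u) ≤ Real.sqrt (∑ i, ((C *ᵥ u) i) ^ 2) := by
      calc u ⬝ᵥ (C *ᵥ u) ≤ |u ⬝ᵥ (C *ᵥ u)| := le_abs_self _
        _ = Real.sqrt ((u ⬝ᵥ (C *ᵥ u)) ^ 2) := (Real.sqrt_sq_eq_abs _).symm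
        _ ≤ Real.sqrt (∑ i, ((C *ᵥ u) i) ^ 2) := Real.sqrt_le_sqrt hcs
    refine h1.trans (le_specNorm C u ?_)
    simp only [← huu]
    simp [dotProduct, pow_two]
  calc specNorm K ^ (2 * q) = (specNorm K ^ 2) ^ q := by rw [← pow_mul]
    _ ≤ lam ^ q := pow_le_pow_left₀ (sq_nonneg _) hstep1 q
    _ ≤ u ⬝ᵥ ((A ^ q) *ᵥ u) := hjensen
    _ = u ⬝ᵥ (C *ᵥ u) := hCu
    _ ≤ specNorm C := hfinal
end
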